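/- For 0 ≤ p ≤ 1 let ρ_p := p·|00⟩⟨00| + (1−p)·|Φ⟩⟨Φ| on ℂ² ⊗ ℂ², where Φ = (|01⟩ + |10⟩)/√2. Then τ(𝔄(ρ_p)) = 1 − p + √(p²/2 + (1−p)²/4 + (p/2)·√(p² + (1−p)²)) + √(p²/2 + (1−p)²/4 − (p/2)·√(p² + (1−p)²)); moreover τ(𝔄(ρ_p)) ≥ 1, with equality if and only if p = 1. -/

import Mathlib

open scoped Matrix Kronecker BigOperators ComplexOrder
open MeasureTheory

/-- Trace norm of a complex square matrix: `tr √(AᴴA)` (the sum of singular values). -/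
noncomputable def traceNorm {n : Type*} [Fintype n] [DecidableEq n] (A : Matrix n n ℂ) : ℝ :=
  (((Matrix.posSemidef_conjTranspose_mul_self A).1.eigenvectorUnitary.1
      * Matrix.diagonal ((fun x : ℝ => (x : ℂ)) ∘ (Real.sqrt ·) ∘ (Matrix.posSemidef_conjTranspose_mul_self A).1.eigenvalues)
      * (star (Matrix.posSemidef_conjTranspose_mul_self A).1.eigenvectorUnitary : Matrix n n ℂ)).trace).re

/-- The greatest cross norm `‖·‖_γ` of an operator on `ℂ^{d₁} ⊗ ℂ^{d₂}`: the infimum of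
`Σᵢ ‖uᵢ‖₁ ‖vᵢ‖₁` over all finite decompositions `T = Σᵢ uᵢ ⊗ vᵢ` into Kronecker products. -/
noncomputable def gcn {d₁ d₂ : ℕ} (T : Matrix (Fin d₁ × Fin d₂) (Fin d₁ × Fin d₂) ℂ) : ℝ :=
  sInf { r : ℝ | ∃ (n : ℕ) (u : Fin n → Matrix (Fin d₁) (Fin d₁) ℂ)
      (v : Fin n → Matrix (Fin d₂) (Fin d₂) ℂ),
      T = ∑ i, u i ⊗ₖ v i ∧ r = ∑ i, traceNorm (u i) * traceNorm (v i) }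

/-- A density matrix: positive semidefinite with trace one. -/
def IsDensityMatrix {n : Type*} [Fintype n] (ρ : Matrix n n ℂ) : Prop :=
  ρ.PosSemidef ∧ ρ.trace = 1

/-- Separability of a state on `ℂ^{d₁} ⊗ ℂ^{d₂}`: a finite convex-type combination
`ρ = Σᵢ ωᵢ ρᵢ⁽¹⁾ ⊗ ρᵢ⁽²⁾` of Kronecker products of density matrices, with `ωᵢ ≥ 0`. -/
def IsSeparable' {d₁ d₂ : ℕ} (ρ : Matrix (Fin d₁ × Fin d₂) (Fin d₁ × Fin d₂) ℂ) : Prop :=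
  ∃ (n : ℕ) (ω : Fin n → ℝ) (ρ₁ : Fin n → Matrix (Fin d₁) (Fin d₁) ℂ)
    (ρ₂ : Fin n → Matrix (Fin d₂) (Fin d₂) ℂ),
    (∀ i, 0 ≤ ω i) ∧ (∀ i, IsDensityMatrix (ρ₁ i)) ∧ (∀ i, IsDensityMatrix (ρ₂ i)) ∧
    ρ = ∑ i, (ω i : ℂ) • (ρ₁ i ⊗ₖ ρ₂ i)

/-- The realignment map `𝔄`: `𝔄(ρ)_{(i,j),(k,l)} = ρ_{(i,k),(j,l)}`. -/
def realign {d : ℕ} (ρ : Matrix (Fin d × Fin d) (Fin d × Fin d) ℂ) :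
    Matrix (Fin d × Fin d) (Fin d × Fin d) ℂ :=
  Matrix.of fun p q => ρ (p.1, q.1) (p.2, q.2)

/-- `τ(𝔄(ρ))`: the trace norm of the realignment of `ρ`. -/
noncomputable def tauRealign {d : ℕ} (ρ : Matrix (Fin d × Fin d) (Fin d × Fin d) ℂ) : ℝ :=
  traceNorm (realign ρ)

/-- The flip operator `𝔽 = Σ_{i,j} |i⊗j⟩⟨j⊗i|` on `ℂ^d ⊗ ℂ^d`. -/
def flipOp (d : ℕ) : Matrix (Fin d × Fin d) (Fin d × Fin d) ℂ :=
  Matrix.of fun p q => if p.1 = q.2 ∧ p.2 = q.1 then 1 else 0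

/-- The Werner state `ρ_f = (1/(d³−d))((d−f) I + (df−1) 𝔽)` on `ℂ^d ⊗ ℂ^d`. -/
noncomputable def wernerState (d : ℕ) (f : ℝ) : Matrix (Fin d × Fin d) (Fin d × Fin d) ℂ :=
  (((d : ℂ) ^ 3 - d)⁻¹) • (((d : ℂ) - (f : ℂ)) • (1 : Matrix (Fin d × Fin d) (Fin d × Fin d) ℂ)
    + ((d : ℂ) * (f : ℂ) - 1) • flipOp d)

/-- The maximally entangled vector `|Ψ⁺⟩ = (1/√d) Σᵢ |i⊗i⟩` on `ℂ^d ⊗ ℂ^d`. -/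
noncomputable def psiPlus (d : ℕ) : Fin d × Fin d → ℂ :=
  fun p => if p.1 = p.2 then ((1 / Real.sqrt d : ℝ) : ℂ) else 0

/-- The isotropic state `ρ_F = ((1−F)/(d²−1))(I − |Ψ⁺⟩⟨Ψ⁺|) + F |Ψ⁺⟩⟨Ψ⁺|` on `ℂ^d ⊗ ℂ^d`. -/
noncomputable def isotropicState (d : ℕ) (F : ℝ) : Matrix (Fin d × Fin d) (Fin d × Fin d) ℂ :=
  (((1 - F : ℝ) : ℂ) / ((d : ℂ) ^ 2 - 1)) •
      ((1 : Matrix (Fin d × Fin d) (Fin d × Fin d) ℂ)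
        - Matrix.vecMulVec (psiPlus d) (star (psiPlus d)))
    + ((F : ℝ) : ℂ) • Matrix.vecMulVec (psiPlus d) (star (psiPlus d))

/-- The two-qubit basis vector `|ab⟩`. -/
def ket2 (a b : Fin 2) : Fin 2 × Fin 2 → ℂ := fun p => if p = (a, b) then 1 else 0

/-- The vector `Φ = (|01⟩ + |10⟩)/√2`. -/
noncomputable def phiVec : Fin 2 × Fin 2 → ℂ :=
  fun p => ((if p = (0, 1) then 1 else 0) + (if p = (1, 0) then 1 else 0))
    / ((Real.sqrt 2 : ℝ) : ℂ)

/-- The state `ρ_p = p |00⟩⟨00| + (1 − p) |Φ⟩⟨Φ|`. -/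
noncomputable def rhoP (p : ℝ) : Matrix (Fin 2 × Fin 2) (Fin 2 × Fin 2) ℂ :=
  ((p : ℝ) : ℂ) • Matrix.vecMulVec (ket2 0 0) (star (ket2 0 0))
    + (((1 - p : ℝ)) : ℂ) • Matrix.vecMulVec phiVec (star phiVec)

noncomputable def Amat (p : ℝ) : Matrix (Fin 2 × Fin 2) (Fin 2 × Fin 2) ℂ :=
  Matrix.of fun i j =>
    if i = (0,0) ∧ j = (0,0) then (p:ℂ)
    else if (i = (0,0) ∧ j = (1,1)) ∨ (i = (1,1) ∧ j = (0,0))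
        ∨ (i = (0,1) ∧ j = (1,0)) ∨ (i = (1,0) ∧ j = (0,1)) then ((1-p:ℝ):ℂ)/2
    else 0

noncomputable def Dmat (p t : ℝ) : Matrix (Fin 2 × Fin 2) (Fin 2 × Fin 2) ℂ :=
  Matrix.diagonal fun i =>
    if i = (0,0) ∨ i = (1,1) then (((1-p)^2/4 : ℝ):ℂ)
    else ((t*(1-p)/2 - (1-p)^2/4 : ℝ):ℂ)

set_option maxHeartbeats 2000000 in
lemma realign_rhoP (p : ℝ) : realign (rhoP p) = Amat p := by
  have h2 : ((Real.sqrt 2 : ℝ) : ℂ) * ((Real.sqrt 2 : ℝ) : ℂ) = 2 := by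
    rw [← Complex.ofReal_mul, Real.mul_self_sqrt (by norm_num)]; norm_num
  ext ⟨i, j⟩ ⟨k, l⟩
  fin_cases i <;> fin_cases j <;> fin_cases k <;> fin_cases l <;>
    · simp only [realign, rhoP, Amat, ket2, phiVec, Matrix.vecMulVec_apply, Matrix.of_apply,
        Matrix.add_apply, Matrix.smul_apply, Prod.mk.injEq, Pi.star_apply, star_div₀, star_add,
        star_one, star_zero, apply_ite (star : ℂ → ℂ), Complex.star_def, Complex.conj_ofReal,
        smul_eq_mul, div_mul_div_comm, h2]
      norm_num
      try ring

set_option maxHeartbeats 2000000 in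
lemma Amat_herm (p : ℝ) : (Amat p)ᴴ = Amat p := by
  ext i j
  fin_cases i <;> fin_cases j <;>
    simp [Amat, Matrix.conjTranspose_apply, Complex.conj_ofReal, map_div₀]

set_option maxHeartbeats 2000000 in
lemma key_sq (p t : ℝ) (ht : (t:ℂ) * (t:ℂ) = (p:ℂ)^2+(1-(p:ℂ))^2) :
    (Amat p * Amat p + Dmat p t) * (Amat p * Amat p + Dmat p t)
      = (((p^2+(1-p)^2 : ℝ)):ℂ) • (Amat p * Amat p) := by
  ext i j
  fin_cases i <;> fin_cases j <;>
    · simp only [Matrix.mul_apply, Matrix.add_apply, Matrix.smul_apply, Fintype.sum_prod_type,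
        Fin.sum_univ_two, Amat, Dmat, Matrix.of_apply, Matrix.diagonal_apply, Prod.mk.injEq,
        smul_eq_mul]
      norm_num <;> push_cast <;>
        (first
          | ring1
          | linear_combination (((1-(p:ℂ))^2/4) : ℂ) * ht)

set_option maxHeartbeats 2000000 in
lemma trace_AD (p t : ℝ) :
    (Amat p * Amat p + Dmat p t).trace = ((p^2+(1-p)^2 + t*(1-p) : ℝ):ℂ) := by
  simp only [Matrix.trace, Matrix.diag, Matrix.mul_apply, Matrix.add_apply,
    Fintype.sum_prod_type, Fin.sum_univ_two, Amat, Dmat, Matrix.of_apply,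
    Matrix.diagonal_apply, Prod.mk.injEq]
  norm_num
  push_cast
  ring

lemma psd_smul_real {n : Type*} [Fintype n] {M : Matrix n n ℂ} (hM : M.PosSemidef)
    {c : ℝ} (hc : 0 ≤ c) : ((c:ℂ) • M).PosSemidef := by
  have h1 : (0:ℂ) ≤ (c:ℂ) := by
    rw [Complex.le_def]; simp [hc]
  exact hM.smul h1

lemma psd_add {n : Type*} [Fintype n] {M N : Matrix n n ℂ} (hM : M.PosSemidef)
    (hN : N.PosSemidef) : (M + N).PosSemidef := by
  exact hM.add hN

lemma Dmat_psd (p : ℝ) (hp0 : 0 ≤ p) (hp1 : p ≤ 1) :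
    (Dmat p (Real.sqrt (p^2+(1-p)^2))).PosSemidef := by
  set t := Real.sqrt (p^2+(1-p)^2) with htdef
  have ht0 : 0 ≤ t := Real.sqrt_nonneg _
  have ht2 : t^2 = p^2+(1-p)^2 := Real.sq_sqrt (by positivity)
  apply Matrix.PosSemidef.diagonal
  intro i
  simp only [Pi.zero_apply]
  split_ifs
  · rw [Complex.zero_le_real]; positivity
  · rw [Complex.zero_le_real]
    have htq : 1 - p ≤ t := by
      rw [htdef]
      have h1 : (1-p)^2 ≤ p^2+(1-p)^2 := by nlinarith
      have := Real.sqrt_le_sqrt h1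
      rwa [Real.sqrt_sq (by linarith)] at this
    nlinarith [mul_nonneg (sub_nonneg.2 htq) (show (0:ℝ) ≤ 1-p by linarith)]

lemma tau_eq (p : ℝ) (hp0 : 0 ≤ p) (hp1 : p ≤ 1) :
    tauRealign (rhoP p) = (1 - p) + Real.sqrt (p^2 + (1-p)^2) := by
  set t := Real.sqrt (p^2+(1-p)^2) with htdef
  have hpos : (0:ℝ) < p^2+(1-p)^2 := by nlinarith [sq_nonneg (2*p-1)]
  have ht0 : 0 < t := Real.sqrt_pos.2 hpos
  have ht2 : t^2 = p^2+(1-p)^2 := Real.sq_sqrt hpos.le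
  have htC : (t:ℂ) * (t:ℂ) = (p:ℂ)^2+(1-(p:ℂ))^2 := by
    rw [← Complex.ofReal_mul]
    have : t * t = p^2+(1-p)^2 := by nlinarith
    rw [this]; push_cast; ring
  set S : Matrix (Fin 2 × Fin 2) (Fin 2 × Fin 2) ℂ :=
    ((t⁻¹ : ℝ):ℂ) • (Amat p * Amat p + Dmat p t) with hSdef
  have hA2 : (Amat p * Amat p).PosSemidef := by
    have h := Matrix.posSemidef_conjTranspose_mul_self (Amat p)
    rwa [Amat_herm] at h
  have hSpsd : S.PosSemidef :=
    psd_smul_real (psd_add hA2 (htdef ▸ Dmat_psd p hp0 hp1)) (inv_nonneg.2 ht0.le)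
  have hB := Matrix.posSemidef_conjTranspose_mul_self (realign (rhoP p))
  have hsq : S ^ 2 = (realign (rhoP p))ᴴ * realign (rhoP p) := by
    rw [realign_rhoP, Amat_herm, pow_two, hSdef, Matrix.smul_mul, Matrix.mul_smul,
      smul_smul, key_sq p t htC, smul_smul]
    have hc : ((t⁻¹ : ℝ):ℂ) * ((t⁻¹ : ℝ):ℂ) * ((p^2+(1-p)^2 : ℝ):ℂ) = 1 := by
      rw [← Complex.ofReal_mul, ← Complex.ofReal_mul, ← ht2]
      norm_cast
      field_simp
    rw [hc, one_smul]
  have key : S = (Matrix.posSemidef_conjTranspose_mul_self (realign (rhoP p))).1.eigenvectorUnitary.1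
      * Matrix.diagonal ((fun x : ℝ => (x : ℂ)) ∘ (Real.sqrt ·) ∘
        (Matrix.posSemidef_conjTranspose_mul_self (realign (rhoP p))).1.eigenvalues)
      * (star (Matrix.posSemidef_conjTranspose_mul_self (realign (rhoP p))).1.eigenvectorUnitary :
        Matrix (Fin 2 × Fin 2) (Fin 2 × Fin 2) ℂ) := by
    open scoped MatrixOrder in
    have h1 := CFC.sqrt_unique (a := (realign (rhoP p))ᴴ * realign (rhoP p)) (b := S)
      (by rw [← hsq, pow_two]) hSpsd.nonneg
    open scoped MatrixOrder in
    rw [CFC.sqrt_eq_real_sqrt _ hB.nonneg, cfcₙ_eq_cfc, hB.1.cfc_eq] at h1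
    rw [← h1]
    rfl
  have htr : S.trace = ((t⁻¹ * (p^2+(1-p)^2 + t*(1-p)) : ℝ):ℂ) := by
    rw [hSdef, Matrix.trace_smul, trace_AD, smul_eq_mul, ← Complex.ofReal_mul]
  rw [tauRealign, traceNorm, ← key, htr, Complex.ofReal_re, ← ht2]
  field_simp
  ring


/-- A two-qubit example: explicit value of `τ(𝔄(ρ_p))`, which is `≥ 1` with equality
iff `p = 1`. -/
theorem tauRealign_rhoP (p : ℝ) (hp : 0 ≤ p ∧ p ≤ 1) :
    tauRealign (rhoP p) = 1 - p
        + Real.sqrt (p ^ 2 / 2 + (1 - p) ^ 2 / 4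
            + p / 2 * Real.sqrt (p ^ 2 + (1 - p) ^ 2))
        + Real.sqrt (p ^ 2 / 2 + (1 - p) ^ 2 / 4
            - p / 2 * Real.sqrt (p ^ 2 + (1 - p) ^ 2)) ∧
    1 ≤ tauRealign (rhoP p) ∧
    (tauRealign (rhoP p) = 1 ↔ p = 1) := by
  obtain ⟨hp0, hp1⟩ := hp
  have hmain := tau_eq p hp0 hp1
  set t := Real.sqrt (p^2+(1-p)^2) with htdef
  have hpos : (0:ℝ) < p^2+(1-p)^2 := by nlinarith [sq_nonneg (2*p-1)]
  have ht0 : 0 < t := Real.sqrt_pos.2 hpos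
  have ht2 : t^2 = p^2+(1-p)^2 := Real.sq_sqrt hpos.le
  have ha : 0 ≤ p^2/2 + (1-p)^2/4 + p/2*t := by
    nlinarith [mul_nonneg hp0 ht0.le, sq_nonneg p, sq_nonneg (1-p)]
  have hb : 0 ≤ p^2/2 + (1-p)^2/4 - p/2*t := by nlinarith [sq_nonneg (p - t)]
  have hab : (p^2/2 + (1-p)^2/4 + p/2*t) * (p^2/2 + (1-p)^2/4 - p/2*t)
      = ((1-p)^2/4)^2 := by linear_combination (-(p^2/4)) * ht2
  have hs : (Real.sqrt (p^2/2 + (1-p)^2/4 + p/2*t)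
      + Real.sqrt (p^2/2 + (1-p)^2/4 - p/2*t))^2 = t^2 := by
    rw [add_sq, Real.sq_sqrt ha, Real.sq_sqrt hb, mul_assoc, ← Real.sqrt_mul ha, hab,
      Real.sqrt_sq (by positivity)]
    linear_combination -ht2
  have hsum : Real.sqrt (p^2/2 + (1-p)^2/4 + p/2*t)
      + Real.sqrt (p^2/2 + (1-p)^2/4 - p/2*t) = t := by
    rw [← Real.sqrt_sq (by positivity : (0:ℝ) ≤ Real.sqrt (p^2/2 + (1-p)^2/4 + p/2*t)
      + Real.sqrt (p^2/2 + (1-p)^2/4 - p/2*t)), hs, Real.sqrt_sq ht0.le]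
  have hpt : p ≤ t := by
    have h1 : p^2 ≤ p^2+(1-p)^2 := by nlinarith
    have h2 := Real.sqrt_le_sqrt h1
    rwa [Real.sqrt_sq hp0] at h2
  refine ⟨?_, ?_, ?_, ?_⟩
  · rw [hmain]; linarith [hsum]
  · rw [hmain]; linarith
  · intro h
    rw [hmain] at h
    have htp : t = p := by linarith
    have h0 : (1-p)^2 = 0 := by nlinarith
    have := sq_eq_zero_iff.mp h0
    linarith
  · rintro rfl
    rw [hmain, htdef]
    norm_num
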